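/- arXiv:math/0101081 — 2 statements merged into one kernel-verified Lean document; each statement's English description precedes it below -/
import Mathlib

section
/- Let T = T(f_1,...,f_n) be the Taylor complex of monomials f_1,...,f_n in R = K[x_1,...,x_n], with basis {e_σ : σ ⊆ [n]} and product e_σ·e_τ = (f_σ f_τ / f_{σ∪τ}) e_σ ∧ e_τ (where f_τ is the lcm of {f_i : i ∈ τ}). Then this product satisfies the Leibniz rule with respect to the Taylor differential ∂(e_σ) = Σ_{i∈σ} (−1)^{|{j∈σ : j<i}|} (f_σ / f_{σ\{i\}}) e_{σ\{i}}, making T a DG algebra. -/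
/-! Statement 14: the product `e_σ e_τ = (f_σ f_τ / f_{σ∪τ}) e_σ ∧ e_τ` on the
Taylor complex of monomials `f₁,…,fₙ` satisfies the Leibniz rule with respect
to the Taylor differential, making the Taylor complex a DG algebra. -/

/-- A monomial in the `N` variables of `K[x_1,…,x_N]`, recorded by its
exponent vector. -/
abbrev Mon (N : ℕ) := Fin N → ℕ

/-- The monomial `x^a` in `K[x_1,…,x_N]`. -/
noncomputable def toMon (K : Type*) [CommSemiring K] {N : ℕ} (a : Mon N) :
    MvPolynomial (Fin N) K :=
  MvPolynomial.monomial (Finsupp.equivFunOnFinite.symm a) 1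

/-- exponent vector of `f_τ`, the least common multiple of the monomials of
exponents `f i`, `i ∈ τ`. -/
def lcmExp {n N : ℕ} (f : Fin n → Mon N) (τ : Finset (Fin n)) : Mon N :=
  fun k => τ.sup fun j => f j k

variable {K : Type*} [CommRing K] {n N : ℕ}

/-- The underlying module of the Taylor complex on `n` monomials: the free
module with basis `e_σ`, `σ ⊆ [n]` (the homological grading is by `σ.card`). -/
abbrev TaylorCx (K : Type*) [CommRing K] (n N : ℕ) :=
  Finset (Fin n) →₀ MvPolynomial (Fin N) K

/-- the sign `(-1)^{|{j ∈ σ : j < i}|}` -/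
def tsign {n : ℕ} (σ : Finset (Fin n)) (i : Fin n) : ℤ :=
  (-1) ^ (σ.filter fun j => j < i).card

open Classical in
/-- the Taylor differential on a basis element:
`∂ e_σ = Σ_{i ∈ σ} (-1)^{|{j∈σ : j<i}|} (f_σ / f_{σ\{i}}) e_{σ\{i}}`. -/
noncomputable def delB (f : Fin n → Mon N) (σ : Finset (Fin n)) : TaylorCx K n N :=
  ∑ i ∈ σ, tsign σ i •
    Finsupp.single (σ.erase i) (toMon K (lcmExp f σ - lcmExp f (σ.erase i)))

/-- the Taylor differential. -/
noncomputable def delT (f : Fin n → Mon N) (x : TaylorCx K n N) : TaylorCx K n N :=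
  x.sum fun σ c => c • delB f σ

/-- the sign of the shuffle merging `σ` and `τ`, coming from `e_σ ∧ e_τ` -/
def wsign {n : ℕ} (σ τ : Finset (Fin n)) : ℤ :=
  (-1) ^ ((σ ×ˢ τ).filter fun p => p.2 < p.1).card

open Classical in
/-- the product of two basis elements:
`e_σ e_τ = (f_σ f_τ / f_{σ∪τ}) e_σ ∧ e_τ`, which is zero if `σ ∩ τ ≠ ∅`. -/
noncomputable def mulB (f : Fin n → Mon N) (σ τ : Finset (Fin n)) : TaylorCx K n N :=
  if Disjoint σ τ then
    wsign σ τ •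
      Finsupp.single (σ ∪ τ)
        (toMon K (lcmExp f σ + lcmExp f τ - lcmExp f (σ ∪ τ)))
  else 0

/-- the product on the Taylor complex. -/
noncomputable def mulT (f : Fin n → Mon N) (x y : TaylorCx K n N) : TaylorCx K n N :=
  x.sum fun σ c => y.sum fun τ d => (c * d) • mulB f σ τ

/-! On basis elements both sides of the Leibniz rule are sums of signed monomial multiples of
basis vectors. If `σ` and `τ` are disjoint, the terms of `∂(e_{σ∪τ})` indexed by `i ∈ σ` match
those of `∂(e_σ) e_τ`, and those indexed by `i ∈ τ` match those of `e_σ ∂(e_τ)`: both monomial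
coefficients are `f_σ f_τ / f_{(σ∪τ)∖i}`, and the signs agree by counting inversions. If `σ` and
`τ` meet, the left side vanishes; on the right only the terms with `σ ∩ τ = {i}` survive, and
for such `i` the two terms are opposite. -/

open Finset

lemma toMon_add {K : Type*} [CommSemiring K] {N : ℕ} (a b : Mon N) :
    toMon K (a + b) = toMon K a * toMon K b := by
  rw [toMon, toMon, toMon, MvPolynomial.monomial_mul, one_mul]
  congr 2
  ext k
  rfl

lemma zsmul_toMon_smul_zsmul_single (z w : ℤ) (a b : Mon N) (ρ : Finset (Fin n)) :
    z • toMon K a • w • Finsupp.single ρ (toMon K b) =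
      Finsupp.single ρ ((z * w) • toMon K (a + b)) := by
  rw [smul_comm (toMon K a) w, Finsupp.smul_single, smul_eq_mul, ← toMon_add, smul_smul,
    Finsupp.smul_single]

section Exponents

variable (f : Fin n → Mon N)

lemma lcmExp_mono {ρ ρ' : Finset (Fin n)} (h : ρ ⊆ ρ') : lcmExp f ρ ≤ lcmExp f ρ' :=
  fun _ => sup_mono h

lemma lcmExp_union_le (ρ ρ' : Finset (Fin n)) :
    lcmExp f (ρ ∪ ρ') ≤ lcmExp f ρ + lcmExp f ρ' := fun k => by
  simp only [lcmExp, sup_union, Pi.add_apply]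
  exact max_le (Nat.le_add_right _ _) (Nat.le_add_left _ _)

/-- Both sides are the exponent of `f_σ f_τ / f_{ρ∪τ}`. -/
lemma lcmExp_leibniz_left {σ τ ρ : Finset (Fin n)} (hρ : ρ ⊆ σ) :
    lcmExp f σ + lcmExp f τ - lcmExp f (σ ∪ τ) + (lcmExp f (σ ∪ τ) - lcmExp f (ρ ∪ τ)) =
      lcmExp f σ - lcmExp f ρ + (lcmExp f ρ + lcmExp f τ - lcmExp f (ρ ∪ τ)) := by
  funext k
  have h₁ := lcmExp_mono f hρ k
  have h₂ := lcmExp_mono f (union_subset_union hρ (subset_refl τ)) k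
  have h₃ := lcmExp_union_le f σ τ k
  have h₄ := lcmExp_union_le f ρ τ k
  simp only [Pi.add_apply, Pi.sub_apply] at *
  omega

lemma lcmExp_leibniz_right {σ τ ρ : Finset (Fin n)} (hρ : ρ ⊆ τ) :
    lcmExp f σ + lcmExp f τ - lcmExp f (σ ∪ τ) + (lcmExp f (σ ∪ τ) - lcmExp f (σ ∪ ρ)) =
      lcmExp f τ - lcmExp f ρ + (lcmExp f σ + lcmExp f ρ - lcmExp f (σ ∪ ρ)) := by
  simpa only [add_comm (lcmExp f σ), union_comm σ] using lcmExp_leibniz_left f (τ := σ) hρ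

end Exponents

section Signs

variable {σ τ : Finset (Fin n)} {i : Fin n}

lemma card_inversions_eq_sum_left (σ τ : Finset (Fin n)) :
    #{p ∈ σ ×ˢ τ | p.2 < p.1} = ∑ a ∈ σ, #{b ∈ τ | b < a} := by
  simp only [card_filter, sum_product]

lemma card_inversions_eq_sum_right (σ τ : Finset (Fin n)) :
    #{p ∈ σ ×ˢ τ | p.2 < p.1} = ∑ b ∈ τ, #{a ∈ σ | b < a} := by
  simp only [card_filter, sum_product_right]

lemma card_inversions_of_mem_left (hi : i ∈ σ) :
    #{p ∈ σ ×ˢ τ | p.2 < p.1} = #{b ∈ τ | b < i} + #{p ∈ σ.erase i ×ˢ τ | p.2 < p.1} := by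
  rw [card_inversions_eq_sum_left, card_inversions_eq_sum_left, ← add_sum_erase _ _ hi]

lemma card_inversions_of_mem_right (hi : i ∈ τ) :
    #{p ∈ σ ×ˢ τ | p.2 < p.1} = #{a ∈ σ | i < a} + #{p ∈ σ ×ˢ τ.erase i | p.2 < p.1} := by
  rw [card_inversions_eq_sum_right, card_inversions_eq_sum_right, ← add_sum_erase _ _ hi]

lemma card_filter_lt_add_card_filter_gt_of_notMem (hi : i ∉ σ) :
    #{a ∈ σ | a < i} + #{a ∈ σ | i < a} = #σ := by
  rw [← card_filter_add_card_filter_not (s := σ) (p := (· < i))]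
  congr 2
  exact filter_congr fun a ha => by
    rw [not_lt, lt_iff_le_and_ne]
    exact and_iff_left (ne_of_mem_of_not_mem ha hi).symm

lemma card_filter_lt_add_card_filter_gt_of_mem (hi : i ∈ σ) :
    #{a ∈ σ | a < i} + #{a ∈ σ | i < a} + 1 = #σ := by
  have h := card_filter_lt_add_card_filter_gt_of_notMem (notMem_erase i σ)
  rw [filter_erase, filter_erase, erase_eq_of_notMem (by simp), erase_eq_of_notMem (by simp),
    card_erase_of_mem hi] at h
  have := card_pos.mpr ⟨i, hi⟩
  omega

lemma card_filter_union_lt (hd : Disjoint σ τ) :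
    #{a ∈ σ ∪ τ | a < i} = #{a ∈ σ | a < i} + #{a ∈ τ | a < i} := by
  rw [filter_union, card_union_of_disjoint (disjoint_filter_filter hd)]

lemma wsign_mul_tsign_union_of_mem_left (hd : Disjoint σ τ) (hi : i ∈ σ) :
    wsign σ τ * tsign (σ ∪ τ) i = tsign σ i * wsign (σ.erase i) τ := by
  simp only [wsign, tsign, ← pow_add]
  refine neg_one_pow_congr ?_
  rw [card_filter_union_lt hd, card_inversions_of_mem_left hi]
  simp only [Nat.even_iff]
  omega

lemma wsign_mul_tsign_union_of_mem_right (hd : Disjoint σ τ) (hi : i ∈ τ) :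
    wsign σ τ * tsign (σ ∪ τ) i = (-1) ^ #σ * tsign τ i * wsign σ (τ.erase i) := by
  simp only [wsign, tsign, ← pow_add]
  refine neg_one_pow_congr ?_
  have := card_filter_lt_add_card_filter_gt_of_notMem (disjoint_right.mp hd hi)
  rw [card_filter_union_lt hd, card_inversions_of_mem_right hi]
  simp only [Nat.even_iff]
  omega

lemma tsign_mul_wsign_erase_of_mem_inter (hiσ : i ∈ σ) (hiτ : i ∈ τ) :
    tsign σ i * wsign (σ.erase i) τ = -((-1) ^ #σ * tsign τ i * wsign σ (τ.erase i)) := by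
  simp only [wsign, tsign, ← pow_add, ← mul_neg_one (_ ^ _), ← pow_succ]
  refine neg_one_pow_congr ?_
  have := card_filter_lt_add_card_filter_gt_of_mem hiσ
  have h₁ := card_inversions_of_mem_left (τ := τ) hiσ
  have h₂ := card_inversions_of_mem_right (σ := σ) hiτ
  simp only [Nat.even_iff]
  omega

end Signs

section LinearStructure

variable (f : Fin n → Mon N)

lemma delT_eq_linearCombination (x : TaylorCx K n N) :
    delT f x = Finsupp.linearCombination _ (delB f) x := rfl

lemma mulT_single_one_left (σ : Finset (Fin n)) (y : TaylorCx K n N) :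
    mulT f (Finsupp.single σ 1) y = Finsupp.linearCombination _ (mulB f σ) y := by
  rw [mulT, Finsupp.sum_single_index (by simp [Finsupp.sum])]
  simp only [one_mul, Finsupp.linearCombination_apply]

lemma mulT_single_one_right (x : TaylorCx K n N) (τ : Finset (Fin n)) :
    mulT f x (Finsupp.single τ 1) = Finsupp.linearCombination _ (fun ρ => mulB f ρ τ) x := by
  rw [mulT, Finsupp.linearCombination_apply]
  refine Finsupp.sum_congr fun ρ _ => ?_
  rw [Finsupp.sum_single_index (by simp), mul_one]

lemma linearCombination_delB {M : Type*} [AddCommGroup M] [Module (MvPolynomial (Fin N) K) M]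
    (v : Finset (Fin n) → M) (σ : Finset (Fin n)) :
    Finsupp.linearCombination _ v (delB (K := K) f σ) =
      ∑ i ∈ σ, tsign σ i • toMon K (lcmExp f σ - lcmExp f (σ.erase i)) • v (σ.erase i) := by
  simp only [delB, map_sum, map_zsmul, Finsupp.linearCombination_single]

lemma mulB_of_disjoint {σ τ : Finset (Fin n)} (hd : Disjoint σ τ) :
    mulB (K := K) f σ τ =
      wsign σ τ • Finsupp.single (σ ∪ τ) (toMon K (lcmExp f σ + lcmExp f τ - lcmExp f (σ ∪ τ))) :=
  if_pos hd

lemma mulB_of_not_disjoint {σ τ : Finset (Fin n)} (hd : ¬Disjoint σ τ) :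
    mulB (K := K) f σ τ = 0 :=
  if_neg hd

end LinearStructure

section Leibniz

variable (f : Fin n → Mon N) {σ τ : Finset (Fin n)}

lemma delT_mulB_of_disjoint (hd : Disjoint σ τ) :
    delT f (mulB (K := K) f σ τ) =
      ∑ i ∈ σ, tsign σ i • toMon K (lcmExp f σ - lcmExp f (σ.erase i)) • mulB f (σ.erase i) τ +
        (-1 : ℤ) ^ #σ • ∑ i ∈ τ,
          tsign τ i • toMon K (lcmExp f τ - lcmExp f (τ.erase i)) • mulB f σ (τ.erase i) := by
  rw [mulB_of_disjoint f hd, delT_eq_linearCombination, map_zsmul,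
    Finsupp.linearCombination_single, delB, smul_sum, smul_sum, sum_union hd, smul_sum]
  refine congrArg₂ (· + ·) ?_ ?_
  · refine sum_congr rfl fun i hi => ?_
    have hiτ : i ∉ τ := disjoint_left.mp hd hi
    rw [mulB_of_disjoint f (hd.mono_left (erase_subset i σ)), zsmul_toMon_smul_zsmul_single,
      zsmul_toMon_smul_zsmul_single, wsign_mul_tsign_union_of_mem_left hd hi,
      erase_union_distrib, erase_eq_of_notMem hiτ, lcmExp_leibniz_left f (erase_subset i σ)]
  · refine sum_congr rfl fun i hi => ?_
    have hiσ : i ∉ σ := disjoint_right.mp hd hi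
    rw [mulB_of_disjoint f (hd.mono_right (erase_subset i τ)), smul_smul,
      zsmul_toMon_smul_zsmul_single, zsmul_toMon_smul_zsmul_single,
      wsign_mul_tsign_union_of_mem_right hd hi, erase_union_distrib, erase_eq_of_notMem hiσ,
      lcmExp_leibniz_right f (erase_subset i τ)]

lemma leibniz_sum_eq_zero_of_not_disjoint (hd : ¬Disjoint σ τ) :
    ∑ i ∈ σ, tsign σ i • toMon K (lcmExp f σ - lcmExp f (σ.erase i)) •
        mulB (K := K) f (σ.erase i) τ +
      (-1 : ℤ) ^ #σ • ∑ i ∈ τ,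
        tsign τ i • toMon K (lcmExp f τ - lcmExp f (τ.erase i)) • mulB f σ (τ.erase i) = 0 := by
  obtain ⟨j, hjσ, hjτ⟩ := not_disjoint_iff.mp hd
  rw [← sum_subset (inter_subset_left (s₁ := σ) (s₂ := τ)),
    ← sum_subset (inter_subset_right (s₁ := σ) (s₂ := τ)),
    smul_sum, ← sum_add_distrib]
  · refine sum_eq_zero fun i hi => ?_
    obtain ⟨hiσ, hiτ⟩ := mem_inter.mp hi
    by_cases hd' : Disjoint (σ.erase i) τ
    · rw [mulB_of_disjoint f hd', mulB_of_disjoint f (disjoint_erase_comm.mp hd'), smul_smul,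
        zsmul_toMon_smul_zsmul_single, zsmul_toMon_smul_zsmul_single,
        ← lcmExp_leibniz_left f (erase_subset i σ), ← lcmExp_leibniz_right f (erase_subset i τ),
        erase_union_of_mem hiτ, union_erase_of_mem hiσ, tsign_mul_wsign_erase_of_mem_inter hiσ hiτ,
        neg_smul, ← Finsupp.single_add, neg_add_cancel, Finsupp.single_zero]
    · rw [mulB_of_not_disjoint f hd', mulB_of_not_disjoint f (disjoint_erase_comm.not.mp hd'),
        smul_zero, smul_zero, smul_zero, smul_zero, smul_zero, add_zero]
  · intro i hiτ hi
    have hiσ : i ∉ σ := fun hiσ => hi (mem_inter.mpr ⟨hiσ, hiτ⟩)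
    have hj : j ∈ τ.erase i := mem_erase.mpr ⟨ne_of_mem_of_not_mem hjσ hiσ, hjτ⟩
    rw [mulB_of_not_disjoint f (not_disjoint_iff.mpr ⟨j, hjσ, hj⟩), smul_zero, smul_zero]
  · intro i hiσ hi
    have hiτ : i ∉ τ := fun hiτ => hi (mem_inter.mpr ⟨hiσ, hiτ⟩)
    have hj : j ∈ σ.erase i := mem_erase.mpr ⟨ne_of_mem_of_not_mem hjτ hiτ, hjσ⟩
    rw [mulB_of_not_disjoint f (not_disjoint_iff.mpr ⟨j, hj, hjτ⟩), smul_zero, smul_zero]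

end Leibniz

theorem stmt14 {K : Type*} [Field K] {n N : ℕ} (f : Fin n → Mon N)
    (σ τ : Finset (Fin n)) :
    delT f (mulT f (Finsupp.single σ (1 : MvPolynomial (Fin N) K))
        (Finsupp.single τ 1)) =
      mulT f (delT f (Finsupp.single σ 1)) (Finsupp.single τ 1) +
        ((-1 : ℤ) ^ σ.card) •
          mulT f (Finsupp.single σ 1) (delT f (Finsupp.single τ 1)) := by
  have delT_single_one (ρ : Finset (Fin n)) :
      delT f (Finsupp.single ρ (1 : MvPolynomial (Fin N) K)) = delB f ρ := by
    rw [delT_eq_linearCombination, Finsupp.linearCombination_single, one_smul]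
  rw [mulT_single_one_left, Finsupp.linearCombination_single, one_smul, delT_single_one,
    delT_single_one, mulT_single_one_right, mulT_single_one_left, linearCombination_delB,
    linearCombination_delB]
  by_cases hd : Disjoint σ τ
  · exact delT_mulB_of_disjoint f hd
  · rw [mulB_of_not_disjoint f hd, leibniz_sum_eq_zero_of_not_disjoint f hd,
      delT_eq_linearCombination, map_zero]
end

section
/- Let f_1,...,f_n be monomials in R = K[x_1,...,x_n], set g_i = f_i/gcd(f_i, f_n) for i = 1,...,n−1. Then the map ψ from the Taylor complex T(g_1,...,g_{n−1}) to T(f_1,...,f_{n−1}) defined on basis elements by ψ(ē_σ) = (f_{σ∪{n}}/f_σ) e_σ is a complex homomorphism lifting the multiplication map R/((f_1,...,f_{n−1}) : f_n) → R/(f_1,...,f_{n−1}) by f_n, and the mapping cone of ψ is isomorphic to the Taylor complex T(f_1,...,f_n). -/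
variable {K : Type*} [CommRing K] {n N : ℕ}

/-- the embedding `Fin n ↪ Fin (n+1)` -/
def csEmb (n : ℕ) : Fin n ↪ Fin (n + 1) :=
  ⟨Fin.castSucc, Fin.castSucc_injective n⟩

open Classical in
/-- `ψ(ē_σ) = (f_{σ∪{n}} / f_σ) e_σ` on basis elements. -/
noncomputable def psiB {K : Type*} [CommRing K] {n N : ℕ}
    (f : Fin (n + 1) → Mon N) (σ : Finset (Fin n)) : TaylorCx K n N :=
  Finsupp.single σ
    (toMon K (lcmExp f (insert (Fin.last n) (σ.map (csEmb n))) -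
      lcmExp f (σ.map (csEmb n))))

/-- `ψ` on the whole Taylor complex. -/
noncomputable def psiT {K : Type*} [CommRing K] {n N : ℕ}
    (f : Fin (n + 1) → Mon N) (x : TaylorCx K n N) : TaylorCx K n N :=
  x.sum fun σ c => c • psiB f σ

/-!
Splitting the subsets of `{1,…,n}` by whether they contain `n` identifies
`T(f₁,…,f_{n-1}) ⊕ T(g)` with `T(f₁,…,fₙ)` as free modules, via `(e_σ, 0) ↦ e_σ` and
`(0, ē_τ) ↦ (-1)^|τ| e_{τ∪{n}}`. Since `g_τ = f_{τ∪{n}} / f_n`, we get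
`g_τ / g_{τ∖i} = f_{τ∪{n}} / f_{(τ∖i)∪{n}}`. So in `∂ e_{τ∪{n}}` the term dropping `n` is
`(-1)^|τ| ψ(ē_τ)` and the terms dropping some `i ∈ τ` are `(-1)^|τ|` times the image of `-∂ ē_τ`:
the isomorphism carries the cone differential to `∂`. The same identity shows that `ψ ∘ ∂` and
`∂ ∘ ψ` both give `e_{σ∖i}` the coefficient `f_{σ∪{n}} / f_{σ∖i}`.
-/

namespace Taylor

open Finset

theorem toMon_add {R : Type*} [CommSemiring R] (a b : Mon N) :
    toMon R (a + b) = toMon R a * toMon R b := by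
  rw [toMon, toMon, toMon, MvPolynomial.monomial_mul, one_mul]
  congr 2
  ext
  simp

section lcmExp

variable (f : Fin n → Mon N)

theorem lcmExp_eq_sup (τ : Finset (Fin n)) : lcmExp f τ = τ.sup f := by
  funext k
  rw [lcmExp, Finset.sup_apply]

theorem lcmExp_mono {σ τ : Finset (Fin n)} (h : σ ⊆ τ) : lcmExp f σ ≤ lcmExp f τ := by
  simpa only [lcmExp_eq_sup] using sup_mono h

theorem lcmExp_insert (i : Fin n) (τ : Finset (Fin n)) :
    lcmExp f (insert i τ) = f i ⊔ lcmExp f τ := by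
  simp only [lcmExp_eq_sup, sup_insert]

theorem lcmExp_tsub_const (c : Mon N) (τ : Finset (Fin n)) :
    lcmExp (fun i => f i - c) τ = (c ⊔ lcmExp f τ) - c := by
  funext k
  induction τ using Finset.induction_on with
  | empty => simp [lcmExp]
  | insert j τ _ ih =>
    simp only [lcmExp, sup_insert, Pi.sub_apply, Pi.sup_apply] at ih ⊢
    omega

end lcmExp

@[simp]
theorem csEmb_apply (i : Fin n) : csEmb n i = Fin.castSucc i := rfl

theorem lcmExp_map (f : Fin (n + 1) → Mon N) (σ : Finset (Fin n)) :
    lcmExp f (σ.map (csEmb n)) = lcmExp (fun i => f (Fin.castSucc i)) σ := by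
  simp only [lcmExp_eq_sup, sup_map]
  rfl

theorem last_notMem_map (τ : Finset (Fin n)) : Fin.last n ∉ τ.map (csEmb n) := by
  simp [Fin.castSucc_ne_last]

theorem tsign_map (σ : Finset (Fin n)) (i : Fin n) :
    tsign (σ.map (csEmb n)) (Fin.castSucc i) = tsign σ i := by
  rw [tsign, tsign, filter_map, card_map]
  rfl

theorem tsign_insert_last_castSucc (τ : Finset (Fin n)) (i : Fin n) :
    tsign (insert (Fin.last n) (τ.map (csEmb n))) (Fin.castSucc i) = tsign τ i := by
  rw [tsign, filter_insert, if_neg (Fin.castSucc_lt_last i).not_gt, ← tsign, tsign_map]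

theorem tsign_insert_last_last (τ : Finset (Fin n)) :
    tsign (insert (Fin.last n) (τ.map (csEmb n))) (Fin.last n) = (-1) ^ τ.card := by
  rw [tsign, filter_insert, if_neg (lt_irrefl _), filter_true_of_mem, card_map]
  simp [Fin.castSucc_lt_last]

theorem delT_eq_linearCombination (f : Fin n → Mon N) :
    delT (K := K) f = Finsupp.linearCombination _ (delB f) := rfl

theorem psiT_eq_linearCombination (f : Fin (n + 1) → Mon N) :
    psiT (K := K) f = Finsupp.linearCombination _ (psiB f) := rfl

theorem psiB_empty (f : Fin (n + 1) → Mon N) :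
    psiB (K := K) f ∅ = Finsupp.single ∅ (toMon K (f (Fin.last n))) := by
  simp [psiB, lcmExp_eq_sup, bot_eq_zero]

theorem delB_insert_last (f : Fin (n + 1) → Mon N) (τ : Finset (Fin n)) :
    delB (K := K) f (insert (Fin.last n) (τ.map (csEmb n))) =
      (-1 : ℤ) ^ τ.card • Finsupp.single (τ.map (csEmb n))
          (toMon K (lcmExp f (insert (Fin.last n) (τ.map (csEmb n))) -
            lcmExp f (τ.map (csEmb n)))) +
        ∑ i ∈ τ, tsign τ i • Finsupp.single (insert (Fin.last n) ((τ.erase i).map (csEmb n)))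
          (toMon K (lcmExp f (insert (Fin.last n) (τ.map (csEmb n))) -
            lcmExp f (insert (Fin.last n) ((τ.erase i).map (csEmb n))))) := by
  rw [delB, sum_insert (last_notMem_map τ), tsign_insert_last_last,
    erase_insert (last_notMem_map τ), sum_map]
  congr 1
  refine sum_congr rfl fun i _ => ?_
  rw [csEmb_apply, tsign_insert_last_castSucc, erase_insert_of_ne (Fin.castSucc_lt_last i).ne',
    ← csEmb_apply, ← map_erase]

section ChainMap

variable (f : Fin (n + 1) → Mon N) (g : Fin n → Mon N)

theorem lcmExp_tsub_lcmExp_erase (hg : ∀ i, g i = f (Fin.castSucc i) - f (Fin.last n))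
    (σ : Finset (Fin n)) (i : Fin n) :
    lcmExp g σ - lcmExp g (σ.erase i) =
      lcmExp f (insert (Fin.last n) (σ.map (csEmb n))) -
        lcmExp f (insert (Fin.last n) ((σ.erase i).map (csEmb n))) := by
  obtain rfl : g = fun i => f (Fin.castSucc i) - f (Fin.last n) := funext hg
  rw [lcmExp_tsub_const, lcmExp_tsub_const, lcmExp_insert, lcmExp_insert, lcmExp_map,
    lcmExp_map, tsub_tsub_tsub_cancel_right le_sup_left]

theorem psiT_delB (hg : ∀ i, g i = f (Fin.castSucc i) - f (Fin.last n)) (σ : Finset (Fin n)) :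
    psiT (K := K) f (delB g σ) = delT (fun i => f (Fin.castSucc i)) (psiB f σ) := by
  rw [psiT_eq_linearCombination, delT_eq_linearCombination, psiB,
    Finsupp.linearCombination_single, delB, delB, map_sum, smul_sum]
  refine sum_congr rfl fun i _ => ?_
  simp only [Finsupp.linearCombination_single, psiB, Finsupp.smul_single, smul_eq_mul]
  rw [smul_mul_assoc, mul_smul_comm, ← toMon_add, ← toMon_add, lcmExp_tsub_lcmExp_erase f g hg,
    ← lcmExp_map, ← lcmExp_map]
  have hsub : (σ.erase i).map (csEmb n) ⊆ σ.map (csEmb n) := map_subset_map.2 (erase_subset i σ)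
  rw [tsub_add_tsub_cancel (lcmExp_mono f (insert_subset_insert _ hsub))
      (lcmExp_mono f (subset_insert _ _)),
    tsub_add_tsub_cancel (lcmExp_mono f (subset_insert _ _)) (lcmExp_mono f hsub)]

theorem psiT_delT (hg : ∀ i, g i = f (Fin.castSucc i) - f (Fin.last n)) (x : TaylorCx K n N) :
    psiT f (delT g x) = delT (fun i => f (Fin.castSucc i)) (psiT f x) := by
  have h : Finsupp.linearCombination _ (psiB f) ∘ₗ Finsupp.linearCombination _ (delB g) =
      Finsupp.linearCombination _ (delB (K := K) fun i => f (Fin.castSucc i)) ∘ₗ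
        Finsupp.linearCombination _ (psiB f) :=
    Finsupp.lhom_ext fun σ c => by
      simp only [LinearMap.comp_apply, Finsupp.linearCombination_single, map_smul]
      exact congrArg (c • ·) (psiT_delB f g hg σ)
  exact LinearMap.congr_fun h x

end ChainMap

noncomputable def finsetSuccEquiv (n : ℕ) :
    Finset (Fin n) ⊕ Finset (Fin n) ≃ Finset (Fin (n + 1)) :=
  Equiv.ofBijective
    (Sum.elim (Finset.map (csEmb n)) fun τ => insert (Fin.last n) (τ.map (csEmb n))) <| by
    refine (Fintype.bijective_iff_injective_and_card _).2 ⟨?_, ?_⟩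
    · rintro (σ | σ) (τ | τ) h <;> simp only [Sum.elim_inl, Sum.elim_inr] at h
      · rw [map_inj.1 h]
      · exact absurd (h ▸ mem_insert_self _ _) (last_notMem_map σ)
      · exact absurd (h ▸ mem_insert_self _ _) (last_notMem_map τ)
      · have h' := congrArg (·.erase (Fin.last n)) h
        simp only [erase_insert (last_notMem_map _)] at h'
        rw [map_inj.1 h']
    · simp [Fintype.card_finset, pow_succ, mul_two]

variable (K n N) in
noncomputable def coneBasis :
    Module.Basis (Finset (Fin n) ⊕ Finset (Fin n)) (MvPolynomial (Fin N) K)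
      (TaylorCx K n N × TaylorCx K n N) :=
  Finsupp.basisSingleOne.prod (Finsupp.basisSingleOne.unitsSMul fun τ => (-1) ^ τ.card)

variable (K n N) in
noncomputable def coneEquiv :
    (TaylorCx K n N × TaylorCx K n N) ≃ₗ[MvPolynomial (Fin N) K] TaylorCx K (n + 1) N :=
  (coneBasis K n N).equiv Finsupp.basisSingleOne (finsetSuccEquiv n)

theorem coneEquiv_inl (σ : Finset (Fin n)) (c : MvPolynomial (Fin N) K) :
    coneEquiv K n N (Finsupp.single σ c, 0) = Finsupp.single (σ.map (csEmb n)) c := by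
  have h : ((Finsupp.single σ c, 0) : TaylorCx K n N × TaylorCx K n N) =
      c • coneBasis K n N (.inl σ) := by
    simp [coneBasis, Module.Basis.prod_apply]
  rw [h, map_smul, coneEquiv, Module.Basis.equiv_apply]
  simp [finsetSuccEquiv]

theorem coneEquiv_inr (τ : Finset (Fin n)) (c : MvPolynomial (Fin N) K) :
    coneEquiv K n N (0, Finsupp.single τ c) =
      (-1 : ℤ) ^ τ.card • Finsupp.single (insert (Fin.last n) (τ.map (csEmb n))) c := by
  have h : ((0, Finsupp.single τ c) : TaylorCx K n N × TaylorCx K n N) =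
      ((-1 : ℤ) ^ τ.card * c) • coneBasis K n N (.inr τ) := by
    simp only [coneBasis, Module.Basis.prod_apply, Sum.elim_inr, LinearMap.coe_inr,
      Function.comp_apply, Module.Basis.unitsSMul_apply, Finsupp.coe_basisSingleOne,
      Prod.smul_mk, smul_zero, Units.smul_def, Finsupp.smul_single, smul_eq_mul, mul_one]
    push_cast
    rw [mul_right_comm, ← mul_pow, neg_one_mul, neg_neg, one_pow, one_mul]
  rw [h, map_smul, coneEquiv, Module.Basis.equiv_apply]
  simp [finsetSuccEquiv]

theorem coneEquiv_delB_zero (f : Fin (n + 1) → Mon N) (σ : Finset (Fin n)) :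
    coneEquiv K n N (delB (fun i => f (Fin.castSucc i)) σ, 0) = delB f (σ.map (csEmb n)) := by
  rw [← LinearMap.inl_apply (R := MvPolynomial (Fin N) K), delB, delB, sum_map, map_sum,
    map_sum]
  refine sum_congr rfl fun i _ => ?_
  rw [map_zsmul, map_zsmul, LinearMap.inl_apply, coneEquiv_inl, ← map_erase, lcmExp_map,
    lcmExp_map, csEmb_apply, tsign_map]

theorem coneEquiv_psiB_neg_delB (f : Fin (n + 1) → Mon N) (g : Fin n → Mon N)
    (hg : ∀ i, g i = f (Fin.castSucc i) - f (Fin.last n)) (τ : Finset (Fin n)) :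
    coneEquiv K n N (psiB f τ, -delB g τ) =
      (-1 : ℤ) ^ τ.card • delB f (insert (Fin.last n) (τ.map (csEmb n))) := by
  have hsplit : ((psiB f τ, -delB g τ) : TaylorCx K n N × TaylorCx K n N) =
      (psiB f τ, 0) - LinearMap.inr (MvPolynomial (Fin N) K) _ _ (delB g τ) := by
    simp
  rw [hsplit, map_sub, psiB, coneEquiv_inl, delB, map_sum, map_sum, delB_insert_last, smul_add,
    smul_smul, ← pow_add, ← two_mul, pow_mul, neg_one_sq, one_pow, one_smul, sub_eq_add_neg,
    ← sum_neg_distrib, smul_sum]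
  congr 1
  refine sum_congr rfl fun i hi => ?_
  rw [map_zsmul, map_zsmul, LinearMap.inr_apply, coneEquiv_inr, lcmExp_tsub_lcmExp_erase f g hg,
    smul_comm _ (tsign τ i), ← card_erase_add_one hi, pow_succ, mul_neg_one, neg_smul, smul_neg]

theorem coneEquiv_coneDiff (f : Fin (n + 1) → Mon N) (g : Fin n → Mon N)
    (hg : ∀ i, g i = f (Fin.castSucc i) - f (Fin.last n)) (p : TaylorCx K n N × TaylorCx K n N) :
    coneEquiv K n N (delT (fun i => f (Fin.castSucc i)) p.1 + psiT f p.2, -delT g p.2) =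
      delT f (coneEquiv K n N p) := by
  set R := MvPolynomial (Fin N) K
  let coneDiff : (TaylorCx K n N × TaylorCx K n N) →ₗ[R] TaylorCx K n N × TaylorCx K n N :=
    ((Finsupp.linearCombination R (delB fun i => f (Fin.castSucc i))).coprod
      (Finsupp.linearCombination R (psiB f))).prod
      (-(Finsupp.linearCombination R (delB g)) ∘ₗ LinearMap.snd R _ _)
  have h : (coneEquiv K n N).toLinearMap ∘ₗ coneDiff =
      Finsupp.linearCombination R (delB f) ∘ₗ (coneEquiv K n N).toLinearMap := by
    refine LinearMap.prod_ext (Finsupp.lhom_ext fun σ c => ?_) (Finsupp.lhom_ext fun τ c => ?_)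
    all_goals simp only [coneDiff, LinearMap.comp_apply, LinearMap.prod_apply, Function.prod,
      LinearMap.coprod_apply, LinearMap.inl_apply, LinearMap.inr_apply, LinearMap.neg_apply,
      LinearMap.snd_apply, map_zero, add_zero, zero_add, neg_zero, LinearEquiv.coe_coe,
      coneEquiv_inl, coneEquiv_inr, map_zsmul, Finsupp.linearCombination_single]
    · rw [← coneEquiv_delB_zero, ← map_smul, Prod.smul_mk, smul_zero]
    · rw [← smul_neg, ← Prod.smul_mk, map_smul, coneEquiv_psiB_neg_delB f g hg, smul_comm]
  exact LinearMap.congr_fun h p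

theorem coneEquiv_mem_span_card (k : ℕ) {p : TaylorCx K n N × TaylorCx K n N}
    (hp : p ∈ Submodule.span (MvPolynomial (Fin N) K)
      (((fun σ : Finset (Fin n) =>
          ((Finsupp.single σ 1, 0) : TaylorCx K n N × TaylorCx K n N)) '' {σ | σ.card = k}) ∪
        ((fun τ : Finset (Fin n) =>
          ((0, Finsupp.single τ 1) : TaylorCx K n N × TaylorCx K n N)) '' {τ | τ.card + 1 = k}))) :
    coneEquiv K n N p ∈ Submodule.span (MvPolynomial (Fin N) K)
      ((fun σ : Finset (Fin (n + 1)) => (Finsupp.single σ 1 : TaylorCx K (n + 1) N)) ''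
        {σ | σ.card = k}) := by
  refine Submodule.mem_comap.1
    ((Submodule.span_le (p := Submodule.comap (coneEquiv K n N).toLinearMap _)).2 ?_ hp)
  rintro _ (⟨σ, hσ, rfl⟩ | ⟨τ, hτ, rfl⟩) <;>
    simp only [SetLike.mem_coe, Submodule.mem_comap, LinearEquiv.coe_coe]
  · rw [coneEquiv_inl]
    exact Submodule.subset_span ⟨_, by simpa using hσ, rfl⟩
  · rw [coneEquiv_inr]
    refine Submodule.smul_of_tower_mem _ _ (Submodule.subset_span ⟨_, ?_, rfl⟩)
    simpa [card_insert_of_notMem (last_notMem_map τ)] using hτ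

end Taylor

theorem stmt15 {K : Type*} [Field K] {n N : ℕ} (f : Fin (n + 1) → Mon N)
    -- `g_i = f_i / gcd(f_i, f_n)` (on exponent vectors, a truncated
    -- subtraction)
    (g : Fin n → Mon N) (hg : ∀ i, g i = f (Fin.castSucc i) - f (Fin.last n)) :
    -- (1) `ψ` is a complex homomorphism `T(g) → T(f₁,…,f_{n-1})`
    (∀ x : TaylorCx K n N,
      psiT f (delT g x) = delT (fun i => f (Fin.castSucc i)) (psiT f x)) ∧
    -- (2) `ψ` lifts multiplication by `f_n` modulo `(f₁,…,f_{n-1})`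
    (∀ c : MvPolynomial (Fin N) K,
      Ideal.Quotient.mk
          (Ideal.span (Set.range fun i : Fin n => toMon K (f (Fin.castSucc i))))
          ((psiT f (Finsupp.single ∅ c)) ∅) =
        Ideal.Quotient.mk _ (toMon K (f (Fin.last n)) * c)) ∧
    -- (3) the mapping cone of `ψ` is isomorphic, as a complex, to the Taylor
    -- complex `T(f₁,…,fₙ)`
    (∃ α : (TaylorCx K n N × TaylorCx K n N) ≃ₗ[MvPolynomial (Fin N) K]
        TaylorCx K (n + 1) N,
      -- `α` commutes with the differentials (cone differential
      -- `D(b, a) = (∂b + ψ(a), -∂a)`)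
      (∀ p : TaylorCx K n N × TaylorCx K n N,
        α (delT (fun i => f (Fin.castSucc i)) p.1 + psiT f p.2,
            -(delT g p.2)) = delT f (α p)) ∧
      -- `α` preserves the homological grading `C(ψ)_k = T(f')_k ⊕ T(g)_{k-1}`
      (∀ k : ℕ, ∀ p ∈ Submodule.span (MvPolynomial (Fin N) K)
          (((fun σ : Finset (Fin n) =>
              ((Finsupp.single σ 1, 0) : TaylorCx K n N × TaylorCx K n N)) ''
                {σ | σ.card = k}) ∪
            ((fun τ : Finset (Fin n) =>
              ((0, Finsupp.single τ 1) : TaylorCx K n N × TaylorCx K n N)) ''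
                {τ | τ.card + 1 = k})),
        α p ∈ Submodule.span (MvPolynomial (Fin N) K)
          ((fun σ : Finset (Fin (n + 1)) =>
            (Finsupp.single σ 1 : TaylorCx K (n + 1) N)) '' {σ | σ.card = k}))) := by
  refine ⟨Taylor.psiT_delT f g hg, fun c => ?_, Taylor.coneEquiv K n N,
    Taylor.coneEquiv_coneDiff f g hg, fun k _ => Taylor.coneEquiv_mem_span_card k⟩
  rw [Taylor.psiT_eq_linearCombination, Finsupp.linearCombination_single, Taylor.psiB_empty,
    Finsupp.smul_single, Finsupp.single_eq_same, smul_eq_mul, mul_comm]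
end
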